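/- arXiv:2109.13329 — 3 statements merged into one kernel-verified Lean document; each statement's English description precedes it below -/
import Mathlib

section
/- For any integer s ∈ Z coprime to m and any integers d, r with m = rd, d ≥ 1, the identity Σ_{i=0}^{d-1} ⟨-s(k+ir)/m⟩ = ⟨-skd/m⟩ + (d-1)/2 holds for every k ∈ Z, where ⟨x⟩ denotes the fractional part of x. -/
open scoped BigOperators

lemma hermite_fract (d : ℕ) (hd : 0 < d) (x : ℚ) :
    ∑ j ∈ Finset.range d, Int.fract (x + (j : ℚ) / d)
      = Int.fract ((d : ℚ) * x) + ((d : ℚ) - 1) / 2 := by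
  have hd' : (0 : ℚ) < d := by positivity
  set y := Int.fract x with hy
  have hy0 : 0 ≤ y := Int.fract_nonneg x
  have hy1 : y < 1 := Int.fract_lt_one x
  set t : ℤ := ⌊(d : ℚ) * y⌋ with ht
  have ht0 : 0 ≤ t := Int.floor_nonneg.mpr (by positivity)
  have htle : (t : ℚ) ≤ (d : ℚ) * y := Int.floor_le _
  have htlt : (d : ℚ) * y < t + 1 := Int.lt_floor_add_one _
  have htd : t < d := by
    have : (d : ℚ) * y < d := by nlinarith
    exact_mod_cast Int.floor_lt.mpr (by exact_mod_cast this)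
  set tn := t.toNat with htn
  have htnt : (tn : ℤ) = t := Int.toNat_of_nonneg ht0
  have htnd : tn ≤ d := by omega
  have htnQ : (tn : ℚ) = (t : ℚ) := by exact_mod_cast congrArg (Int.cast : ℤ → ℚ) htnt
  have hterm : ∀ j ∈ Finset.range d,
      Int.fract (x + (j : ℚ) / d)
        = y + (j : ℚ) / d - (if d - tn ≤ j then 1 else 0) := by
    intro j hj
    have hjd : j < d := Finset.mem_range.mp hj
    have hxy : x + (j : ℚ) / d = (⌊x⌋ : ℚ) + (y + (j : ℚ) / d) := by
      rw [hy, ← add_assoc, Int.floor_add_fract]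
    rw [hxy, Int.fract_intCast_add]
    rw [Int.fract]
    by_cases hc : d - tn ≤ j
    · have hjQ : (d : ℚ) - t ≤ (j : ℚ) := by
        have : (d - tn : ℕ) ≤ j := hc
        have h2 : ((d : ℤ) - tn : ℤ) ≤ (j : ℤ) := by omega
        rw [htnt] at h2
        exact_mod_cast h2
      have h1 : (1 : ℚ) ≤ y + (j : ℚ) / d := by
        rw [← sub_nonneg]
        have : y + (j : ℚ) / d - 1 = ((d : ℚ) * y + j - d) / d := by field_simp
        rw [this]
        apply div_nonneg _ hd'.le
        linarith
      have h2 : y + (j : ℚ) / d < 2 := by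
        have : (j : ℚ) / d < 1 := by
          rw [div_lt_one hd']; exact_mod_cast hjd
        linarith
      have : ⌊y + (j : ℚ) / d⌋ = 1 := by
        apply Int.floor_eq_iff.mpr
        constructor <;> push_cast <;> linarith
      rw [this, if_pos hc]; push_cast; ring
    · have hjlt : j < d - tn := Nat.lt_of_not_le hc
      have hjQ : (j : ℚ) ≤ (d : ℚ) - t - 1 := by
        have h2 : (j : ℤ) ≤ (d : ℤ) - tn - 1 := by omega
        rw [htnt] at h2
        exact_mod_cast h2
      have h1 : (0 : ℚ) ≤ y + (j : ℚ) / d := by positivity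
      have h2 : y + (j : ℚ) / d < 1 := by
        rw [← sub_neg]
        have : y + (j : ℚ) / d - 1 = ((d : ℚ) * y + j - d) / d := by field_simp
        rw [this]
        apply div_neg_of_neg_of_pos _ hd'
        linarith
      have : ⌊y + (j : ℚ) / d⌋ = 0 := by
        apply Int.floor_eq_iff.mpr
        constructor <;> push_cast <;> linarith
      rw [this, if_neg hc]; push_cast; ring
  rw [Finset.sum_congr rfl hterm]
  rw [Finset.sum_sub_distrib, Finset.sum_add_distrib]
  have hsum1 : ∑ _j ∈ Finset.range d, y = d * y := by
    rw [Finset.sum_const, Finset.card_range, nsmul_eq_mul]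
  have hsum2 : ∑ j ∈ Finset.range d, (j : ℚ) / d = ((d : ℚ) - 1) / 2 := by
    rw [← Finset.sum_div]
    have hg : (∑ j ∈ Finset.range d, (j : ℚ)) = (d : ℚ) * ((d : ℚ) - 1) / 2 := by
      have := Finset.sum_range_id_mul_two d
      have hcast : (∑ j ∈ Finset.range d, (j : ℚ)) * 2 = (d : ℚ) * ((d : ℚ) - 1) := by
        have h2 : ((∑ j ∈ Finset.range d, j) * 2 : ℕ) = (d * (d - 1) : ℕ) := this
        have h3 : ((∑ j ∈ Finset.range d, j : ℕ) : ℚ) * 2 = ((d : ℚ)) * (((d - 1 : ℕ)) : ℚ) := by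
          exact_mod_cast congrArg (Nat.cast : ℕ → ℚ) h2
        rw [Nat.cast_sub hd] at h3
        push_cast at h3 ⊢
        linarith
      linarith
    rw [hg]; field_simp
  have hsum3 : ∑ j ∈ Finset.range d, (if d - tn ≤ j then (1 : ℚ) else 0) = t := by
    rw [← Finset.sum_filter]
    have hfil : (Finset.range d).filter (fun j => d - tn ≤ j) = Finset.Ico (d - tn) d := by
      ext j; simp only [Finset.mem_filter, Finset.mem_range, Finset.mem_Ico]; omega
    rw [hfil]
    simp only [Finset.sum_const, Nat.card_Ico, nsmul_eq_mul, mul_one]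
    have : d - (d - tn) = tn := by omega
    rw [this, htnQ]
  rw [hsum1, hsum2, hsum3]
  have hfr2 : Int.fract ((d : ℚ) * x) = (d : ℚ) * y - t := by
    have hxx : (d : ℚ) * x = ((d : ℤ) * ⌊x⌋ : ℤ) + (d : ℚ) * y := by
      rw [hy]; push_cast; rw [← mul_add, Int.floor_add_fract]
    rw [hxx, Int.fract_intCast_add, Int.fract, ← ht]
  rw [hfr2]; ring

theorem stmt3 (m r d : ℕ) (hr : 0 < r) (hd : 0 < d) (hm : m = r * d)
    (s : ℤ) (hs : Int.gcd s (m : ℤ) = 1) (k : ℤ) :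
    ∑ i ∈ Finset.range d,
        Int.fract ((-(s * (k + (i : ℤ) * (r : ℤ))) : ℤ) / (m : ℚ))
      = Int.fract ((-(s * k * (d : ℤ)) : ℤ) / (m : ℚ)) + ((d : ℚ) - 1) / 2 := by
  have hm0 : 0 < m := by rw [hm]; positivity
  have hmQ : (0 : ℚ) < m := by exact_mod_cast hm0
  have hdQ : (0 : ℚ) < d := by exact_mod_cast hd
  have hrQ : (0 : ℚ) < r := by exact_mod_cast hr
  have hmrd : (m : ℚ) = (r : ℚ) * d := by exact_mod_cast congrArg (Nat.cast : ℕ → ℚ) hm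
  set x : ℚ := (-(s * k) : ℤ) / (m : ℚ) with hx
  -- coprimality with d
  have hsd : IsCoprime s (d : ℤ) := by
    have h1 : IsCoprime s (m : ℤ) := Int.isCoprime_iff_gcd_eq_one.mpr hs
    have : (m : ℤ) = (r : ℤ) * d := by exact_mod_cast hm
    rw [this] at h1
    exact h1.of_mul_right_right
  obtain ⟨u, v, huv⟩ := hsd
  -- the permutation
  set σ : ℕ → ℕ := fun i => ((-s * i) % (d : ℤ)).toNat with hσ
  set τ : ℕ → ℕ := fun j => ((-u * j) % (d : ℤ)).toNat with hτ
  have hdZ : (0 : ℤ) < d := by exact_mod_cast hd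
  have hmodlt : ∀ a : ℤ, (a % (d : ℤ)).toNat < d := by
    intro a
    have h1 : a % (d : ℤ) < d := Int.emod_lt_of_pos a hdZ
    have h2 : 0 ≤ a % (d : ℤ) := Int.emod_nonneg a (by omega)
    omega
  have hmodcast : ∀ a : ℤ, ((a % (d : ℤ)).toNat : ℤ) = a % d := by
    intro a
    exact Int.toNat_of_nonneg (Int.emod_nonneg a (by omega))
  have hdvd1 : (d : ℤ) ∣ (-s) * (-u) - 1 := ⟨-v, by linarith [huv]⟩
  have hdvd2 : (d : ℤ) ∣ (-u) * (-s) - 1 := ⟨-v, by linarith [huv]⟩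
  have helper : ∀ (a b : ℤ), (d : ℤ) ∣ a * b - 1 → ∀ j : ℕ, j < d →
      ((a * (((b * j : ℤ) % d).toNat : ℤ)) % d).toNat = j := by
    intro a b hab j hjd
    obtain ⟨w, hw⟩ := hab
    have h1 : (a * (((b * j : ℤ) % d).toNat : ℤ)) % d = j % d := by
      rw [hmodcast]
      have hmm : ((b * (j : ℤ)) % d) % d = (b * (j : ℤ)) % d :=
        Int.emod_emod_of_dvd _ dvd_rfl
      calc (a * ((b * j) % d)) % d = (a * (b * j)) % d := Int.ModEq.mul_left a hmm
        _ = (j + d * (w * j)) % d := by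
            congr 1
            linear_combination (j : ℤ) * hw
        _ = j % d := Int.add_mul_emod_self_left ..
    rw [h1, Int.emod_eq_of_lt (by positivity) (by exact_mod_cast hjd)]
    simp
  have hστ : ∀ j ∈ Finset.range d, σ (τ j) = j := by
    intro j hj
    have hjd : j < d := Finset.mem_range.mp hj
    have := helper (-s) (-u) hdvd1 j hjd
    simpa [hσ, hτ] using this
  have hτσ : ∀ i ∈ Finset.range d, τ (σ i) = i := by
    intro i hi
    have hid : i < d := Finset.mem_range.mp hi
    have := helper (-u) (-s) hdvd2 i hid
    simpa [hσ, hτ] using this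
  -- each term equals fract (x + σ i / d)
  have hterm : ∀ i ∈ Finset.range d,
      Int.fract ((-(s * (k + (i : ℤ) * (r : ℤ))) : ℤ) / (m : ℚ))
        = Int.fract (x + ((σ i : ℚ)) / d) := by
    intro i hi
    have h1 : ((-(s * (k + (i : ℤ) * (r : ℤ))) : ℤ) : ℚ) / (m : ℚ)
        = x + ((-s * i : ℤ) : ℚ) / d := by
      rw [hx, hmrd]
      push_cast
      field_simp
      ring
    rw [h1]
    have h2 : ((-s * i : ℤ) : ℚ) / d
        = ((σ i : ℚ)) / d + (((-s * i) / (d : ℤ) : ℤ) : ℚ) := by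
      have hdm : (-s * (i : ℤ)) % d + (d : ℤ) * ((-s * i) / d) = -s * i := Int.emod_add_mul_ediv _ _
      have hcast : ((σ i : ℕ) : ℚ) = (((-s * (i : ℤ)) % d : ℤ) : ℚ) := by
        rw [hσ]; exact_mod_cast congrArg (Int.cast : ℤ → ℚ) (hmodcast (-s * i))
      rw [hcast]
      have h3 : (((-s * (i : ℤ)) % d : ℤ) : ℚ) + (d : ℚ) * (((-s * i) / (d : ℤ) : ℤ) : ℚ)
          = ((-s * i : ℤ) : ℚ) := by exact_mod_cast congrArg (Int.cast : ℤ → ℚ) hdm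
      rw [← h3, add_div, mul_div_cancel_left₀ _ hdQ.ne']
    rw [h2, ← add_assoc, Int.fract_add_intCast]
  rw [Finset.sum_congr rfl hterm]
  -- reindex
  have hreindex : ∑ i ∈ Finset.range d, Int.fract (x + ((σ i : ℚ)) / d)
      = ∑ j ∈ Finset.range d, Int.fract (x + (j : ℚ) / d) := by
    apply Finset.sum_nbij' σ τ
    · intro a _; exact Finset.mem_range.mpr (hmodlt _)
    · intro a _; exact Finset.mem_range.mpr (hmodlt _)
    · exact hτσ
    · exact hστ
    · intro a _; rfl
  rw [hreindex, hermite_fract d hd x]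
  have hxd : (d : ℚ) * x = ((-(s * k * (d : ℤ)) : ℤ) : ℚ) / (m : ℚ) := by
    rw [hx, hmrd]
    push_cast
    field_simp
  rw [hxd]
end

section
/- Let d and r be positive integers, m = rd, and k ∈ Z. Then Σ_{a=0,...,m-1, a ≡ k (mod r)} ω_m(a) = ω_m(kd), where ω_m(a) = θ_m(a) - (1/2)N_m if m ∤ a and ω_m(a) = 0 if m | a. -/
open scoped BigOperators

noncomputable def theta (m : ℕ) [NeZero m] (a : ℤ) : MonoidAlgebra ℚ (ZMod m)ˣ :=
  ∑ s : (ZMod m)ˣ, MonoidAlgebra.single s⁻¹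
    (Int.fract ((-(a * ((s : ZMod m).val : ℤ)) : ℤ) / (m : ℚ)))

noncomputable def Nelt (m : ℕ) [NeZero m] : MonoidAlgebra ℚ (ZMod m)ˣ :=
  ∑ τ : (ZMod m)ˣ, MonoidAlgebra.single τ (1 : ℚ)

/-- `ω_m(a) = θ_m(a) - (1/2)N_m` if `m ∤ a`, and `ω_m(a) = 0` if `m ∣ a`. -/
noncomputable def omegaElt (m : ℕ) [NeZero m] (a : ℤ) : MonoidAlgebra ℚ (ZMod m)ˣ :=
  if (m : ℤ) ∣ a then 0 else theta m a - (2⁻¹ : ℚ) • Nelt m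

/-- The sawtooth-type coefficient function. -/
noncomputable def gq (m : ℕ) (c : ℤ) : ℚ :=
  if c % (m : ℤ) = 0 then 0 else ((c % (m : ℤ) : ℤ) : ℚ) / m - 2⁻¹

lemma gq_congr (m : ℕ) {c c' : ℤ} (h : c ≡ c' [ZMOD (m : ℤ)]) : gq m c = gq m c' := by
  unfold gq
  rw [Int.ModEq] at h
  rw [h]

lemma sum_range_cast (n : ℕ) : ∑ j ∈ Finset.range n, (j : ℚ) = n * (n - 1) / 2 := by
  induction n with
  | zero => simp
  | succ n ih => rw [Finset.sum_range_succ, ih]; push_cast; ring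

/-- Core distribution relation for `gq`. -/
lemma core (m r d : ℕ) (hr : 0 < r) (hd : 0 < d) (hm : m = r * d) (c : ℤ) :
    ∑ b ∈ (Finset.range m).filter (fun b : ℕ => Int.ModEq (r : ℤ) (b : ℤ) c), gq m (b : ℤ)
      = gq m (c * d) := by
  have hm0 : 0 < m := hm ▸ Nat.mul_pos hr hd
  set b₀ : ℕ := (c % r).toNat with hb₀def
  have hcr0 : 0 ≤ c % r := Int.emod_nonneg c (by exact_mod_cast hr.ne')
  have hcrlt : c % r < r := Int.emod_lt_of_pos c (by exact_mod_cast hr)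
  have hb₀ : (b₀ : ℤ) = c % r := Int.toNat_of_nonneg hcr0
  have hb₀lt : b₀ < r := by omega
  have decomp : ∀ b : ℕ, Int.ModEq (r : ℤ) (b : ℤ) c → b % r = b₀ := by
    intro b hbc
    have h1 : (b : ℤ) % r = c % r := hbc
    have h2 : ((b % r : ℕ) : ℤ) = (b₀ : ℤ) := by push_cast; rw [h1, hb₀]
    exact_mod_cast h2
  have key : ∑ b ∈ (Finset.range m).filter (fun b : ℕ => Int.ModEq (r : ℤ) (b : ℤ) c),
      gq m (b : ℤ) = ∑ j ∈ Finset.range d, gq m ((b₀ + j * r : ℕ) : ℤ) := by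
    refine Finset.sum_nbij' (fun b => b / r) (fun j => b₀ + j * r) ?_ ?_ ?_ ?_ ?_
    · intro b hb
      simp only [Finset.mem_filter, Finset.mem_range] at hb ⊢
      rw [Nat.div_lt_iff_lt_mul hr]
      calc b < m := hb.1
        _ = d * r := by rw [hm, mul_comm]
    · intro j hj
      rw [Finset.mem_range] at hj
      simp only [Finset.mem_filter, Finset.mem_range]
      refine ⟨?_, ?_⟩
      · calc b₀ + j * r < r + j * r := by omega
          _ = (j + 1) * r := by ring
          _ ≤ d * r := Nat.mul_le_mul_right r (by omega)
          _ = m := by rw [hm, mul_comm]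
      · show ((b₀ + j * r : ℕ) : ℤ) % r = c % r
        push_cast
        rw [Int.add_mul_emod_self_right, hb₀, Int.emod_emod_of_dvd _ dvd_rfl]
    · intro b hb
      simp only [Finset.mem_filter, Finset.mem_range] at hb
      rw [← decomp b hb.2]
      exact Nat.mod_add_div' b r
    · intro j hj
      show (b₀ + j * r) / r = j
      rw [Nat.add_mul_div_right _ _ hr, Nat.div_eq_of_lt hb₀lt, Nat.zero_add]
    · intro b hb
      simp only [Finset.mem_filter, Finset.mem_range] at hb
      have : b₀ + b / r * r = b := by rw [← decomp b hb.2]; exact Nat.mod_add_div' b r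
      rw [this]
  rw [key]
  -- now compute both sides explicitly
  have hterm : ∀ j ∈ Finset.range d, gq m ((b₀ + j * r : ℕ) : ℤ)
      = (if b₀ + j * r = 0 then 0 else ((b₀ + j * r : ℕ) : ℚ) / m - 2⁻¹) := by
    intro j hj
    rw [Finset.mem_range] at hj
    have hlt : b₀ + j * r < m := by
      calc b₀ + j * r < r + j * r := by omega
        _ = (j + 1) * r := by ring
        _ ≤ d * r := Nat.mul_le_mul_right r (by omega)
        _ = m := by rw [hm, mul_comm]
    have hmod : ((b₀ + j * r : ℕ) : ℤ) % m = ((b₀ + j * r : ℕ) : ℤ) :=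
      Int.emod_eq_of_lt (by positivity) (by exact_mod_cast hlt)
    unfold gq
    rw [hmod]
    by_cases h0 : b₀ + j * r = 0
    · simp [h0]
    · rw [if_neg (by exact_mod_cast h0), if_neg (by exact_mod_cast h0)]
      push_cast
      ring
  rw [Finset.sum_congr rfl hterm]
  by_cases hb0 : b₀ = 0
  · -- r ∣ c, both sides are computed
    have hdvd : (m : ℤ) ∣ c * d := by
      have : (r : ℤ) ∣ c := by
        rw [Int.dvd_iff_emod_eq_zero, ← hb₀, hb0]; simp
      obtain ⟨e, he⟩ := this
      exact ⟨e, by rw [he, hm]; push_cast; ring⟩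
    have hrhs : gq m (c * d) = 0 := by
      simp [gq, Int.emod_emod_of_dvd, Int.emod_eq_zero_of_dvd hdvd]
    rw [hrhs]
    have hs : ∀ j ∈ Finset.range d, (if b₀ + j * r = 0 then (0:ℚ)
        else ((b₀ + j * r : ℕ) : ℚ) / m - 2⁻¹)
        = (if j = 0 then (0:ℚ) else (j : ℚ) * r / m - 2⁻¹) := by
      intro j hj
      by_cases h : j = 0
      · simp [h, hb0]
      · rw [hb0, if_neg (by simp [Nat.mul_eq_zero, h, hr.ne']), if_neg h]
        push_cast
        ring
    rw [Finset.sum_congr rfl hs]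
    obtain ⟨d', rfl⟩ : ∃ d', d = d' + 1 := ⟨d - 1, by omega⟩
    rw [Finset.sum_range_succ', if_pos rfl, add_zero]
    have hs2 : ∀ j ∈ Finset.range d', (if j + 1 = 0 then (0:ℚ)
        else ((j + 1 : ℕ) : ℚ) * r / m - 2⁻¹) = ((j : ℚ) + 1) * r / m - 2⁻¹ := by
      intro j hj
      rw [if_neg (by omega)]
      push_cast
      ring
    rw [Finset.sum_congr rfl hs2]
    have hsum : ∑ j ∈ Finset.range d', (((j : ℚ) + 1) * r / m - 2⁻¹)
        = (∑ j ∈ Finset.range d', (j : ℚ) + d') * r / m - d' * 2⁻¹ := by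
      rw [Finset.sum_sub_distrib, ← Finset.sum_div, ← Finset.sum_mul, Finset.sum_add_distrib]
      simp [mul_comm]
    rw [hsum, sum_range_cast]
    have hmq : (m : ℚ) = r * (d' + 1) := by rw [hm]; push_cast; ring
    have hrq : (r : ℚ) ≠ 0 := by positivity
    have hdq : (d' : ℚ) + 1 ≠ 0 := by positivity
    rw [hmq]
    field_simp
    ring
  · -- b₀ ≠ 0
    have hbq : (0 : ℚ) < b₀ := by positivity
    have hrhs : gq m (c * d) = (b₀ : ℚ) * d / m - 2⁻¹ := by
      unfold gq
      have hmod : c * d % m = (b₀ : ℤ) * d := by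
        rw [hm]
        push_cast
        rw [mul_comm c (d:ℤ), mul_comm (r:ℤ) (d:ℤ), Int.mul_emod_mul_of_pos _ _
          (by exact_mod_cast hd), ← hb₀]
        ring
      rw [hmod, if_neg (by positivity)]
      push_cast
      ring
    rw [hrhs]
    have : ∀ j ∈ Finset.range d, (if b₀ + j * r = 0 then (0:ℚ)
        else ((b₀ + j * r : ℕ) : ℚ) / m - 2⁻¹) = ((b₀ : ℚ) + j * r) / m - 2⁻¹ := by
      intro j hj
      rw [if_neg (by omega)]
      push_cast
      ring_nf
    rw [Finset.sum_congr rfl this]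
    rw [Finset.sum_sub_distrib, ← Finset.sum_div, Finset.sum_add_distrib]
    rw [← Finset.sum_mul, sum_range_cast]
    simp only [Finset.sum_const, Finset.card_range, nsmul_eq_mul]
    have hmq : (m : ℚ) = r * d := by rw [hm]; push_cast; ring
    have hrq : (r : ℚ) ≠ 0 := by positivity
    have hdq : (d : ℚ) ≠ 0 := by positivity
    rw [hmq]
    field_simp
    ring

lemma not_dvd_aux (m : ℕ) [NeZero m] {a : ℤ} (h : ¬ (m : ℤ) ∣ a) (s : (ZMod m)ˣ) :
    ¬ (m : ℤ) ∣ -(a * ((s : ZMod m).val : ℤ)) := by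
  intro hdvd
  rw [Int.dvd_neg] at hdvd
  apply h
  have hcop : IsCoprime (m : ℤ) (((s : ZMod m).val : ℤ)) := by
    rw [Int.isCoprime_iff_gcd_eq_one, Int.gcd_natCast_natCast]
    exact (ZMod.val_coe_unit_coprime s).symm
  exact hcop.dvd_of_dvd_mul_right hdvd

lemma omega_eq (m : ℕ) [NeZero m] (a : ℤ) :
    omegaElt m a = ∑ s : (ZMod m)ˣ,
      MonoidAlgebra.single s⁻¹ (gq m (-(a * ((s : ZMod m).val : ℤ)))) := by
  unfold omegaElt
  by_cases h : (m : ℤ) ∣ a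
  · rw [if_pos h]
    symm
    refine Finset.sum_eq_zero fun s _ => ?_
    have hdvd : (m : ℤ) ∣ -(a * ((s : ZMod m).val : ℤ)) :=
      Dvd.dvd.neg_right (h.mul_right _)
    have hz : gq m (-(a * ((s : ZMod m).val : ℤ))) = 0 := by
      unfold gq
      rw [if_pos (Int.emod_eq_zero_of_dvd hdvd)]
    rw [hz]
    simp
  · rw [if_neg h]
    have hN : (2⁻¹ : ℚ) • Nelt m = ∑ s : (ZMod m)ˣ, MonoidAlgebra.single s⁻¹ (2⁻¹ : ℚ) := by
      rw [Nelt, Finset.smul_sum,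
        ← Equiv.sum_comp (Equiv.inv (ZMod m)ˣ)
          (fun τ => (2⁻¹ : ℚ) • MonoidAlgebra.single τ (1 : ℚ))]
      refine Finset.sum_congr rfl fun s _ => ?_
      rw [Equiv.inv_apply, MonoidAlgebra.smul_single', mul_one]
    rw [hN, theta, ← Finset.sum_sub_distrib]
    refine Finset.sum_congr rfl fun s _ => ?_
    rw [← MonoidAlgebra.single_sub]
    congr 1
    rw [Int.fract_div_intCast_eq_div_intCast_mod]
    have hnd := not_dvd_aux m h s
    unfold gq
    rw [if_neg (fun h0 => hnd (Int.dvd_of_emod_eq_zero h0))]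

lemma inv_step (m : ℕ) (hm0 : 0 < m) (t t' : ℕ)
    (htt' : ((t : ℤ) * t') ≡ 1 [ZMOD (m : ℤ)]) (a : ℕ) (ha : a < m) :
    ((-(((((-((a : ℤ) * t)) % m).toNat : ℤ)) * t')) % (m : ℤ)).toNat = a := by
  have hmz : (0 : ℤ) < m := by exact_mod_cast hm0
  have e1 : ((((-((a : ℤ) * t)) % m).toNat : ℤ)) = (-((a : ℤ) * t)) % m :=
    Int.toNat_of_nonneg (Int.emod_nonneg _ hmz.ne')
  have c1 : ((((-((a : ℤ) * t)) % m).toNat : ℤ)) ≡ -((a : ℤ) * t) [ZMOD (m : ℤ)] := by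
    rw [e1]; exact Int.emod_emod_of_dvd _ dvd_rfl
  have c2 : -(((((-((a : ℤ) * t)) % m).toNat : ℤ)) * t') ≡ (a : ℤ) * ((t : ℤ) * t')
      [ZMOD (m : ℤ)] := by
    have := (c1.mul_right (t' : ℤ)).neg
    calc -(((((-((a : ℤ) * t)) % m).toNat : ℤ)) * t')
        ≡ -(-((a : ℤ) * t) * t') [ZMOD (m : ℤ)] := this
      _ = (a : ℤ) * ((t : ℤ) * t') := by ring
  have c3 : -(((((-((a : ℤ) * t)) % m).toNat : ℤ)) * t') ≡ (a : ℤ) [ZMOD (m : ℤ)] := by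
    calc -(((((-((a : ℤ) * t)) % m).toNat : ℤ)) * t')
        ≡ (a : ℤ) * ((t : ℤ) * t') [ZMOD (m : ℤ)] := c2
      _ ≡ (a : ℤ) * 1 [ZMOD (m : ℤ)] := htt'.mul_left (a : ℤ)
      _ = (a : ℤ) := by ring
  have c4 : (-(((((-((a : ℤ) * t)) % m).toNat : ℤ)) * t')) % (m : ℤ) = (a : ℤ) := by
    rw [c3]
    exact Int.emod_eq_of_lt (by positivity) (by exact_mod_cast ha)
  rw [c4]
  exact Int.toNat_natCast a

lemma reindex (m r : ℕ) (hm0 : 0 < m) (hrm : (r : ℤ) ∣ (m : ℤ)) (t t' : ℕ)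
    (htt' : ((t : ℤ) * t') ≡ 1 [ZMOD (m : ℤ)]) (k : ℤ) :
    ∑ a ∈ (Finset.range m).filter (fun a : ℕ => Int.ModEq (r : ℤ) (a : ℤ) k),
        gq m (-((a : ℤ) * t))
      = ∑ b ∈ (Finset.range m).filter (fun b : ℕ => Int.ModEq (r : ℤ) (b : ℤ) (-(k * t))),
        gq m (b : ℤ) := by
  have hmz : (0 : ℤ) < m := by exact_mod_cast hm0
  have htt'' : ((t' : ℤ) * t) ≡ 1 [ZMOD (m : ℤ)] := by rwa [mul_comm]
  have hmod : ∀ x : ℤ, ((x % (m : ℤ)).toNat : ℤ) = x % m :=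
    fun x => Int.toNat_of_nonneg (Int.emod_nonneg x hmz.ne')
  have hlt : ∀ x : ℤ, (x % (m : ℤ)).toNat < m := by
    intro x
    have h1 := Int.emod_lt_of_pos x hmz
    have h2 := hmod x
    omega
  have hcong : ∀ x : ℤ, (((x % (m : ℤ)).toNat : ℤ)) ≡ x [ZMOD (m : ℤ)] := by
    intro x
    rw [hmod x]
    exact Int.emod_emod_of_dvd _ dvd_rfl
  refine Finset.sum_nbij' (fun a => ((-((a : ℤ) * t)) % (m : ℤ)).toNat)
    (fun b => ((-((b : ℤ) * t')) % (m : ℤ)).toNat) ?_ ?_ ?_ ?_ ?_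
  · intro a ha
    simp only [Finset.mem_filter, Finset.mem_range] at ha ⊢
    refine ⟨hlt _, ?_⟩
    have c1 : (((((-((a : ℤ) * t)) % m).toNat : ℤ))) ≡ -((a : ℤ) * t) [ZMOD (r : ℤ)] :=
      (hcong _).of_dvd hrm
    have c2 : -((a : ℤ) * t) ≡ -(k * t) [ZMOD (r : ℤ)] := (ha.2.mul_right (t : ℤ)).neg
    exact c1.trans c2
  · intro b hb
    simp only [Finset.mem_filter, Finset.mem_range] at hb ⊢
    refine ⟨hlt _, ?_⟩
    have c1 : (((((-((b : ℤ) * t')) % m).toNat : ℤ))) ≡ -((b : ℤ) * t') [ZMOD (r : ℤ)] :=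
      (hcong _).of_dvd hrm
    have c2 : -((b : ℤ) * t') ≡ -(-(k * t) * t') [ZMOD (r : ℤ)] := (hb.2.mul_right (t' : ℤ)).neg
    have c3 : -(-(k * t) * (t' : ℤ)) = k * ((t : ℤ) * t') := by ring
    have c4 : k * ((t : ℤ) * t') ≡ k * 1 [ZMOD (r : ℤ)] := (htt'.of_dvd hrm).mul_left k
    calc (((((-((b : ℤ) * t')) % m).toNat : ℤ)))
        ≡ -((b : ℤ) * t') [ZMOD (r : ℤ)] := c1
      _ ≡ -(-(k * t) * t') [ZMOD (r : ℤ)] := c2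
      _ = k * ((t : ℤ) * t') := c3
      _ ≡ k * 1 [ZMOD (r : ℤ)] := c4
      _ = k := by ring
  · intro a ha
    simp only [Finset.mem_filter, Finset.mem_range] at ha
    exact inv_step m hm0 t t' htt' a ha.1
  · intro b hb
    simp only [Finset.mem_filter, Finset.mem_range] at hb
    exact inv_step m hm0 t' t htt'' b hb.1
  · intro a ha
    exact gq_congr m ((hcong (-((a : ℤ) * t))).symm)

theorem stmt4 (m r d : ℕ) [NeZero m] (hr : 0 < r) (hd : 0 < d) (hm : m = r * d) (k : ℤ) :
    ∑ a ∈ (Finset.range m).filter (fun a : ℕ => Int.ModEq (r : ℤ) (a : ℤ) k),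
        omegaElt m (a : ℤ)
      = omegaElt m (k * (d : ℤ)) := by
  have hm0 : 0 < m := hm ▸ Nat.mul_pos hr hd
  have hrm : (r : ℤ) ∣ (m : ℤ) := Int.natCast_dvd_natCast.mpr ⟨d, hm⟩
  have e1 : ∑ a ∈ (Finset.range m).filter (fun a : ℕ => Int.ModEq (r : ℤ) (a : ℤ) k),
      omegaElt m (a : ℤ)
      = ∑ a ∈ (Finset.range m).filter (fun a : ℕ => Int.ModEq (r : ℤ) (a : ℤ) k),
        ∑ s : (ZMod m)ˣ, MonoidAlgebra.single s⁻¹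
          (gq m (-((a : ℤ) * (((s : ZMod m).val : ℤ))))) :=
    Finset.sum_congr rfl fun a _ => omega_eq m (a : ℤ)
  rw [e1, omega_eq m (k * (d : ℤ)), Finset.sum_comm]
  refine Finset.sum_congr rfl fun s _ => ?_
  set t : ℕ := (s : ZMod m).val with ht
  set t' : ℕ := ((s⁻¹ : (ZMod m)ˣ) : ZMod m).val with ht'
  have h2 : ((t : ZMod m)) = (s : ZMod m) := ZMod.natCast_rightInverse _
  have h3 : ((t' : ZMod m)) = ((s⁻¹ : (ZMod m)ˣ) : ZMod m) := ZMod.natCast_rightInverse _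
  have h4 : ((t * t' : ℕ) : ZMod m) = ((1 : ℕ) : ZMod m) := by
    push_cast
    rw [h2, h3, ← Units.val_mul]
    simp
  have h5 : t * t' ≡ 1 [MOD m] := (ZMod.natCast_eq_natCast_iff _ _ _).mp h4
  have htt' : ((t : ℤ) * t') ≡ 1 [ZMOD (m : ℤ)] := by
    have := Int.natCast_modEq_iff.mpr h5
    push_cast at this
    exact this
  have key : ∑ a ∈ (Finset.range m).filter (fun a : ℕ => Int.ModEq (r : ℤ) (a : ℤ) k),
      gq m (-((a : ℤ) * t)) = gq m (-(k * (d : ℤ) * t)) := by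
    rw [reindex m r hm0 hrm t t' htt' k, core m r d hr hd hm (-(k * t))]
    exact congrArg (gq m) (by ring)
  rw [← key]
  exact (map_sum (MonoidAlgebra.singleAddHom (s⁻¹ : (ZMod m)ˣ)) _ _).symm
end

section
/- Let a, b, c ∈ Z satisfy m ∤ a, m ∤ b, m ∤ c, and m | a+b+c. Then α = θ_m(a) + θ_m(b) + θ_m(c) - N_m is a short element of Z[G_m], i.e., all its coefficients on the group elements of G_m lie in {0,1}. -/
open scoped BigOperators

/-- An element of the group ring is short if all its coefficients lie in `{0, 1}`
(in particular it lies in `ℤ[G_m]`). -/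
def IsShort {m : ℕ} [NeZero m] (x : MonoidAlgebra ℚ (ZMod m)ˣ) : Prop :=
  ∀ σ : (ZMod m)ˣ, x.coeff σ = 0 ∨ x.coeff σ = 1

lemma theta_apply (m : ℕ) [NeZero m] (a : ℤ) (σ : (ZMod m)ˣ) :
    (theta m a).coeff σ = Int.fract ((-(a * (((σ⁻¹ : (ZMod m)ˣ) : ZMod m).val : ℤ)) : ℤ) / (m : ℚ)) := by
  classical
  unfold theta
  rw [MonoidAlgebra.coeff_sum, Finsupp.finset_sum_apply, Finset.sum_eq_single σ⁻¹]
  · simp [MonoidAlgebra.coeff_single, Finsupp.single_apply]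
  · intro s _ hs
    simp only [MonoidAlgebra.coeff_single, Finsupp.single_apply, ite_eq_right_iff]
    intro h; exact absurd (by rw [← h]; simp) hs
  · simp

lemma Nelt_apply (m : ℕ) [NeZero m] (σ : (ZMod m)ˣ) : (Nelt m).coeff σ = 1 := by
  classical
  unfold Nelt
  rw [MonoidAlgebra.coeff_sum, Finsupp.finset_sum_apply, Finset.sum_eq_single σ]
  · simp [MonoidAlgebra.coeff_single, Finsupp.single_apply]
  · intro s _ hs
    simp [MonoidAlgebra.coeff_single, Finsupp.single_apply, hs]
  · simp

lemma not_dvd_mul_val (m : ℕ) [NeZero m] (a : ℤ) (ha : ¬ ((m : ℤ) ∣ a)) (σ : (ZMod m)ˣ) :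
    ¬ ((m : ℤ) ∣ a * (((σ : ZMod m)).val : ℤ)) := by
  intro h
  have hco : Nat.Coprime ((σ : ZMod m)).val m := ZMod.val_coe_unit_coprime σ
  have hico : IsCoprime (m : ℤ) (((σ : ZMod m)).val : ℤ) := by
    rw [Int.isCoprime_iff_gcd_eq_one, Int.gcd_natCast_natCast]
    exact hco.symm
  exact ha (hico.dvd_of_dvd_mul_right h)

theorem stmt6 (m : ℕ) [NeZero m] (hm : 1 < m) (a b c : ℤ)
    (ha : ¬ ((m : ℤ) ∣ a)) (hb : ¬ ((m : ℤ) ∣ b)) (hc : ¬ ((m : ℤ) ∣ c))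
    (habc : (m : ℤ) ∣ (a + b + c)) :
    IsShort (theta m a + theta m b + theta m c - Nelt m) := by
  intro σ
  have hm0 : (0:ℚ) < (m:ℚ) := by exact_mod_cast Nat.zero_lt_of_lt hm
  set t : ℤ := (((σ⁻¹ : (ZMod m)ˣ) : ZMod m).val : ℤ) with ht
  set A : ℤ := (-(a * t)) % (m : ℤ) with hA
  set B : ℤ := (-(b * t)) % (m : ℤ) with hB
  set C : ℤ := (-(c * t)) % (m : ℤ) with hC
  have hval : (theta m a + theta m b + theta m c - Nelt m).coeff σ
      = (A : ℚ) / m + (B : ℚ) / m + (C : ℚ) / m - 1 := by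
    rw [MonoidAlgebra.coeff_sub, Finsupp.sub_apply, MonoidAlgebra.coeff_add, Finsupp.add_apply, MonoidAlgebra.coeff_add, Finsupp.add_apply, theta_apply, theta_apply,
      theta_apply, Nelt_apply, Int.fract_div_intCast_eq_div_intCast_mod,
      Int.fract_div_intCast_eq_div_intCast_mod, Int.fract_div_intCast_eq_div_intCast_mod]
  have hmz : (m : ℤ) ≠ 0 := by positivity
  have hAb : 0 ≤ A ∧ A < m := ⟨Int.emod_nonneg _ hmz, Int.emod_lt_of_pos _ (by positivity)⟩
  have hBb : 0 ≤ B ∧ B < m := ⟨Int.emod_nonneg _ hmz, Int.emod_lt_of_pos _ (by positivity)⟩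
  have hCb : 0 ≤ C ∧ C < m := ⟨Int.emod_nonneg _ hmz, Int.emod_lt_of_pos _ (by positivity)⟩
  have hA0 : A ≠ 0 := by
    rw [hA, Ne, ← Int.dvd_iff_emod_eq_zero, dvd_neg]
    exact not_dvd_mul_val m a ha σ⁻¹
  have hd : (m : ℤ) ∣ (A + B + C) := by
    have h1 : (m : ℤ) ∣ (-(a * t) + -(b * t) + -(c * t)) := by
      have h2 := habc.mul_right t
      have e : -(a * t) + -(b * t) + -(c * t) = -((a + b + c) * t) := by ring
      rw [e]
      exact dvd_neg.mpr h2
    have e2 : -(a * t) % (m:ℤ) + -(b * t) % (m:ℤ) + -(c * t) % (m:ℤ)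
        = (-(a * t) + -(b * t) + -(c * t))
          - m * ((-(a * t)) / m + (-(b * t)) / m + (-(c * t)) / m) := by
      rw [Int.emod_def, Int.emod_def, Int.emod_def]; ring
    rw [hA, hB, hC, e2]
    exact dvd_sub h1 (Dvd.intro _ rfl)
  clear_value A B C
  have hsum : A + B + C = m ∨ A + B + C = 2 * m := by
    obtain ⟨k, hk⟩ := hd
    have hmi : (0:ℤ) < (m:ℤ) := by exact_mod_cast Nat.zero_lt_of_lt hm
    have hApos : 0 < A := lt_of_le_of_ne hAb.1 (Ne.symm hA0)
    have hs0 : 0 < (m:ℤ) * k := by linarith [hBb.1, hCb.1]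
    have hk0 : 0 < k := by
      by_contra h
      push_neg at h
      nlinarith [mul_nonpos_of_nonneg_of_nonpos hmi.le h]
    have hk3 : k < 3 := by
      by_contra h
      push_neg at h
      nlinarith [mul_le_mul_of_nonneg_left h hmi.le, hAb.2, hBb.2, hCb.2]
    interval_cases k <;> omega
  rw [hval]
  rcases hsum with h | h
  · left
    have hq : (A : ℚ) + B + C = m := by exact_mod_cast congrArg (Int.cast : ℤ → ℚ) h
    field_simp
    linarith
  · right
    have hq : (A : ℚ) + B + C = 2 * m := by exact_mod_cast congrArg (Int.cast : ℤ → ℚ) h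
    field_simp
    linarith
end
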